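/- arXiv:math/0610467 — 4 statements merged into one kernel-verified Lean document; each statement's English description precedes it below -/
import Mathlib

section
/- Let A be a unital C*-algebra, let u and v be unitary elements of A such that the smallest closed *-subalgebra of A containing u and v is all of A, and let σ be a *-automorphism of A with σ(u) = v and σ(v) = u. Then the fixed-point set {a ∈ A : σ(a) = a} is equal to the smallest closed *-subalgebra of A containing the set {uⁿ + vⁿ : n ∈ ℤ}. -/
/-!
The fixed-point set of `σ` is a closed *-subalgebra containing every `uⁿ + vⁿ`, which gives one
inclusion. Conversely, a fixed point `a` equals `(a + σ a) / 2`, and `x ↦ x + σ x` is continuous,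
so by density it suffices that `x + σ x` lies in the *-algebra `B` generated by the `uⁿ + vⁿ`
whenever `x` is a noncommutative polynomial in `u, u⁻¹, v, v⁻¹`. The identity
`(uᵐ + vᵐ)(g + σ g) = (uᵐg + σ(uᵐg)) + (vᵐg + σ(vᵐg))` shows that the `g` with
`uᵐg + σ(uᵐg), vᵐg + σ(vᵐg) ∈ B` for all `m` form a submodule stable under left multiplication
by all powers of `u` and `v`; it contains `1`, hence every such polynomial.
-/

open StarAlgebra

lemma map_coe_unitary_zpow {A B F : Type*} [Monoid A] [StarMul A] [Monoid B] [StarMul B]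
    [FunLike F A B] [MonoidHomClass F A B] [StarHomClass F A B] {f : F}
    {u : unitary A} {v : unitary B} (h : f u = v) (n : ℤ) :
    f ((u ^ n : unitary A) : A) = ((v ^ n : unitary B) : B) := by
  let fu : unitary A →* unitary B := Unitary.map ⟨(f : A →* B), map_star f⟩
  have hfu : fu u = v := Subtype.ext h
  exact congrArg Subtype.val (hfu ▸ map_zpow fu u n)

lemma zpow_add_zpow_mul_add_map {A F : Type*} [Ring A] [StarRing A] [FunLike F A A]
    [RingHomClass F A A] [StarHomClass F A A] {σ : F} {u v : unitary A}
    (hσu : σ u = v) (hσv : σ v = u) (m : ℤ) (g : A) :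
    (((u ^ m : unitary A) : A) + ((v ^ m : unitary A) : A)) * (g + σ g) =
      (((u ^ m : unitary A) : A) * g + σ (((u ^ m : unitary A) : A) * g)) +
        (((v ^ m : unitary A) : A) * g + σ (((v ^ m : unitary A) : A) * g)) := by
  simp only [map_mul, map_coe_unitary_zpow hσu, map_coe_unitary_zpow hσv]
  noncomm_ring

section PowerSums

variable {R A : Type*} [CommRing R] [StarRing R] [Ring A] [StarRing A] [Algebra R A]
  [StarModule R A]

variable (R) in
def powerSumAlgebra (u v : unitary A) : StarSubalgebra R A :=
  adjoin R {a : A | ∃ n : ℤ, a = ((u ^ n : unitary A) : A) + ((v ^ n : unitary A) : A)}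

lemma zpow_add_zpow_mem_powerSumAlgebra (u v : unitary A) (n : ℤ) :
    ((u ^ n : unitary A) : A) + ((v ^ n : unitary A) : A) ∈ powerSumAlgebra R u v :=
  subset_adjoin R _ ⟨n, rfl⟩

lemma powerSumAlgebra_comm (u v : unitary A) :
    powerSumAlgebra R v u = powerSumAlgebra R u v := by
  unfold powerSumAlgebra
  congr 2
  ext
  simp only [add_comm]

variable {σ : A →⋆ₐ[R] A} {u v : unitary A}

variable (σ u v) in
def symmetrizable : Submodule R A where
  carrier := {g | ∀ m : ℤ,
    ((u ^ m : unitary A) : A) * g + σ (((u ^ m : unitary A) : A) * g) ∈ powerSumAlgebra R u v ∧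
    ((v ^ m : unitary A) : A) * g + σ (((v ^ m : unitary A) : A) * g) ∈ powerSumAlgebra R u v}
  add_mem' {g h} hg hh m := by
    have split : ∀ x : A,
        x * (g + h) + σ (x * (g + h)) = (x * g + σ (x * g)) + (x * h + σ (x * h)) := by
      intro x; rw [mul_add, map_add]; abel
    rw [split, split]
    exact ⟨add_mem (hg m).1 (hh m).1, add_mem (hg m).2 (hh m).2⟩
  zero_mem' m := by simp
  smul_mem' r g hg m := by
    simp only [mul_smul_comm, map_smul, ← smul_add]
    exact ⟨Subalgebra.smul_mem _ (hg m).1 r, Subalgebra.smul_mem _ (hg m).2 r⟩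

lemma symmetrizable_comm : symmetrizable σ v u = symmetrizable σ u v := by
  ext g
  simp only [symmetrizable, Submodule.mem_mk, AddSubmonoid.mem_mk, AddSubsemigroup.mem_mk,
    powerSumAlgebra_comm v u, and_comm]

lemma one_mem_symmetrizable (hσu : σ u = v) (hσv : σ v = u) : 1 ∈ symmetrizable σ u v :=
  fun m ↦ by
    simp only [mul_one, map_coe_unitary_zpow hσu, map_coe_unitary_zpow hσv]
    exact ⟨zpow_add_zpow_mem_powerSumAlgebra u v m,
      powerSumAlgebra_comm (R := R) u v ▸ zpow_add_zpow_mem_powerSumAlgebra (R := R) v u m⟩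

lemma coe_zpow_mul_mem_symmetrizable (hσu : σ u = v) (hσv : σ v = u) (k : ℤ) {g : A}
    (hg : g ∈ symmetrizable σ u v) : ((u ^ k : unitary A) : A) * g ∈ symmetrizable σ u v := by
  intro m
  have shift : ∀ j : ℤ, ((u ^ j : unitary A) : A) * (((u ^ k : unitary A) : A) * g) =
      ((u ^ (j + k) : unitary A) : A) * g := fun j ↦ by
    rw [← mul_assoc, zpow_add, Submonoid.coe_mul]
  have expand := zpow_add_zpow_mul_add_map hσu hσv m (((u ^ k : unitary A) : A) * g)
  rw [shift] at expand
  rw [shift, eq_sub_of_add_eq' expand.symm]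
  exact ⟨(hg _).1, sub_mem (mul_mem (zpow_add_zpow_mem_powerSumAlgebra u v m) (hg k).1) (hg _).1⟩

lemma mul_mem_symmetrizable_of_mem_adjoin (hσu : σ u = v) (hσv : σ v = u) {x : A}
    (hx : x ∈ adjoin R ({(u : A), (v : A)} : Set A)) {g : A} (hg : g ∈ symmetrizable σ u v) :
    x * g ∈ symmetrizable σ u v := by
  have step : ∀ (k : ℤ) {g : A}, g ∈ symmetrizable σ u v →
      ((u ^ k : unitary A) : A) * g ∈ symmetrizable σ u v ∧
        ((v ^ k : unitary A) : A) * g ∈ symmetrizable σ u v := fun k g hg ↦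
    ⟨coe_zpow_mul_mem_symmetrizable hσu hσv k hg, symmetrizable_comm (σ := σ) ▸
      coe_zpow_mul_mem_symmetrizable hσv hσu k (symmetrizable_comm (σ := σ) ▸ hg)⟩
  have coe_star (w : unitary A) : star (w : A) = ((w ^ (-1 : ℤ) : unitary A) : A) := by
    rw [← Unitary.coe_star, Unitary.star_eq_inv, zpow_neg_one]
  rw [← StarSubalgebra.mem_toSubalgebra, adjoin_toSubalgebra] at hx
  induction hx using Algebra.adjoin_induction generalizing g with
  | mem x hx =>
    rcases hx with (rfl | rfl) | hx
    · simpa using (step 1 hg).1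
    · simpa using (step 1 hg).2
    · rw [Set.mem_star] at hx
      rcases hx with h | h <;> rw [← star_star x, h, coe_star]
      exacts [(step (-1) hg).1, (step (-1) hg).2]
  | algebraMap r =>
    rw [Algebra.algebraMap_eq_smul_one, smul_one_mul]
    exact Submodule.smul_mem _ r hg
  | add x y _ _ hx hy => rw [add_mul]; exact add_mem (hx hg) (hy hg)
  | mul x y _ _ hx hy => rw [mul_assoc]; exact hx (hy hg)

lemma add_map_mem_powerSumAlgebra (hσu : σ u = v) (hσv : σ v = u) {x : A}
    (hx : x ∈ adjoin R ({(u : A), (v : A)} : Set A)) : x + σ x ∈ powerSumAlgebra R u v := by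
  simpa using (mul_mem_symmetrizable_of_mem_adjoin hσu hσv hx (one_mem_symmetrizable hσu hσv) 0).1

lemma powerSumAlgebra_le_equalizer (hσu : σ u = v) (hσv : σ v = u) :
    powerSumAlgebra R u v ≤ StarAlgHom.equalizer σ (StarAlgHom.id R A) := by
  refine StarAlgHom.adjoin_le_equalizer _ _ ?_
  rintro _ ⟨n, rfl⟩
  simp [map_coe_unitary_zpow hσu, map_coe_unitary_zpow hσv, add_comm]

end PowerSums

section Closure

variable {R A : Type*} [CommRing R] [StarRing R] [Ring A] [StarRing A] [Algebra R A]
  [StarModule R A] [TopologicalSpace A] [IsTopologicalRing A] [ContinuousStar A]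
  {σ : A →⋆ₐ[R] A} {u v : unitary A}

lemma add_map_mem_topologicalClosure (hσ : Continuous σ) (hσu : σ u = v) (hσv : σ v = u)
    (hgen : (adjoin R ({(u : A), (v : A)} : Set A)).topologicalClosure = ⊤) (x : A) :
    x + σ x ∈ (powerSumAlgebra R u v).topologicalClosure := by
  have hclosed : IsClosed {x | x + σ x ∈ (powerSumAlgebra R u v).topologicalClosure} :=
    (StarSubalgebra.isClosed_topologicalClosure _).preimage (continuous_id.add hσ)
  have hdense : closure (adjoin R ({(u : A), (v : A)} : Set A) : Set A) = Set.univ := by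
    rw [← StarSubalgebra.topologicalClosure_coe, hgen, StarSubalgebra.coe_top]
  refine closure_minimal (fun y hy ↦ ?_) hclosed (hdense ▸ Set.mem_univ x)
  exact StarSubalgebra.le_topologicalClosure _ (add_map_mem_powerSumAlgebra hσu hσv hy)

lemma topologicalClosure_powerSumAlgebra_le_equalizer [T2Space A] (hσ : Continuous σ)
    (hσu : σ u = v) (hσv : σ v = u) :
    (powerSumAlgebra R u v).topologicalClosure ≤ StarAlgHom.equalizer σ (StarAlgHom.id R A) :=
  StarSubalgebra.topologicalClosure_minimal (powerSumAlgebra_le_equalizer hσu hσv)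
    (isClosed_eq hσ continuous_id)

end Closure

theorem fixed_point_algebra_eq_symmetric_words
    {A : Type*} [CStarAlgebra A]
    (u v : unitary A)
    (hgen : (StarAlgebra.adjoin ℂ ({(u : A), (v : A)} : Set A)).topologicalClosure = ⊤)
    (σ : A ≃⋆ₐ[ℂ] A) (hσu : σ u = v) (hσv : σ v = u) :
    {a : A | σ a = a} =
      ((StarAlgebra.adjoin ℂ
        {a : A | ∃ n : ℤ, a = ((u ^ n : unitary A) : A) + ((v ^ n : unitary A) : A)}
       ).topologicalClosure : Set A) := by
  let τ : A →⋆ₐ[ℂ] A := σ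
  have hτ : Continuous τ := (StarAlgEquiv.isometry σ).continuous
  refine Set.Subset.antisymm (fun a ha ↦ ?_)
    (topologicalClosure_powerSumAlgebra_le_equalizer hτ hσu hσv)
  have h2a :=
    StarSubalgebra.smul_mem _ (add_map_mem_topologicalClosure hτ hσu hσv hgen a) (2⁻¹ : ℂ)
  rwa [show τ a = a from ha, ← two_smul ℂ a, smul_smul, inv_mul_cancel₀ two_ne_zero,
    one_smul] at h2a
end

section
/- Let A be a unital C*-algebra, let u and v be unitary elements of A, and let σ be a *-automorphism of A with σ(u) = v and σ(v) = u. Let φ : FreeGroup (Fin 2) → A be the map sending a reduced word in the two free generators to the corresponding product of integer powers of u and v (i.e., φ is induced by the group homomorphism from the free group on two generators to the unitary group of A sending the first generator to u and the second to v). Then for every g in the free group on two generators, the element φ(g) + σ(φ(g)) lies in the smallest closed *-subalgebra of A containing the set {uⁿ + vⁿ : n ∈ ℤ}. -/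
/-!
Let `s` be the swap of the two free generators and `T g = φ g + φ (s g)`. As `σ ∘ φ = φ ∘ s`, this
is the element `φ g + σ (φ g)` of the theorem, and `T (x ^ k) = u ^ k + v ^ k` for a generator `x`.
Since `s` is an involution, `T g * T h = T (g * h) + T (g * s h)`. For `g = x ^ k * y ^ j * h'` this
gives `T g = T (x ^ k) * T (y ^ j * h') - T (x ^ k * s (y ^ j * h'))`. If `y ≠ x` then `s y = x`, so
the last word is `x ^ (k + j) * s h'`; if `y = x` the syllables of `g` merge already. Either way the
words on the right have fewer syllables than `g`, and induction on the number of syllables applies.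
-/

section FlipSum

variable {G R : Type*} [Group G] [Ring R]

def flipSum (φ : G →* R) (s : G →* G) (g : G) : R := φ g + φ (s g)

theorem flipSum_mul_flipSum (φ : G →* R) {s : G →* G} (hs : ∀ g, s (s g) = g) (g h : G) :
    flipSum φ s g * flipSum φ s h = flipSum φ s (g * h) + flipSum φ s (g * s h) := by
  simp only [flipSum, map_mul, hs, add_mul, mul_add]
  abel

end FlipSum

open FreeGroup

namespace FreeGroup

variable {α : Type*}

/-- Consecutive letters may coincide: the word `x₁ ^ k₁ * ⋯ * xₘ ^ kₘ` need not be reduced. -/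
def syllableProd (L : List (α × ℤ)) : FreeGroup α :=
  (L.map fun p => of p.1 ^ p.2).prod

@[simp]
theorem syllableProd_nil : syllableProd ([] : List (α × ℤ)) = 1 := rfl

@[simp]
theorem syllableProd_cons (x : α) (k : ℤ) (L : List (α × ℤ)) :
    syllableProd ((x, k) :: L) = of x ^ k * syllableProd L := rfl

theorem syllableProd_append (L₁ L₂ : List (α × ℤ)) :
    syllableProd (L₁ ++ L₂) = syllableProd L₁ * syllableProd L₂ := by
  simp [syllableProd]

theorem syllableProd_cons_cons_self (x : α) (k j : ℤ) (L : List (α × ℤ)) :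
    syllableProd ((x, k) :: (x, j) :: L) = syllableProd ((x, k + j) :: L) := by
  simp [zpow_add, mul_assoc]

theorem exists_syllableProd_eq (g : FreeGroup α) : ∃ L : List (α × ℤ), syllableProd L = g := by
  induction g using FreeGroup.induction_on with
  | C1 => exact ⟨[], rfl⟩
  | of x => exact ⟨[(x, 1)], by simp⟩
  | inv_of x _ => exact ⟨[(x, -1)], by simp⟩
  | mul g h ihg ihh =>
    obtain ⟨Lg, rfl⟩ := ihg
    obtain ⟨Lh, rfl⟩ := ihh
    exact ⟨Lg ++ Lh, syllableProd_append Lg Lh⟩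

theorem map_syllableProd {β : Type*} (e : α → β) (L : List (α × ℤ)) :
    map e (syllableProd L) = syllableProd (L.map (Prod.map e id)) := by
  simp [syllableProd, map_list_prod, Function.comp_def]

end FreeGroup

abbrev swapGenerators : FreeGroup (Fin 2) →* FreeGroup (Fin 2) := map (Equiv.swap 0 1)

theorem swapGenerators_swapGenerators (g : FreeGroup (Fin 2)) :
    swapGenerators (swapGenerators g) = g := by
  suffices swapGenerators.comp swapGenerators = MonoidHom.id _ from DFunLike.congr_fun this g
  ext i
  simp

section SymmetricPart

variable {R S : Type*} [Ring R] [SetLike S R] [SubringClass S R] {B : S}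
  (φ : FreeGroup (Fin 2) →* R)

theorem flipSum_syllableProd_mem
    (hgen : ∀ (i : Fin 2) (k : ℤ), flipSum φ swapGenerators (of i ^ k) ∈ B) :
    ∀ L : List (Fin 2 × ℤ), flipSum φ swapGenerators (syllableProd L) ∈ B
  | [] => by simpa using hgen 0 0
  | [(x, k)] => by simpa using hgen x k
  | (x, k) :: (y, j) :: L => by
    by_cases hxy : y = x
    · subst hxy
      rw [syllableProd_cons_cons_self]
      exact flipSum_syllableProd_mem hgen ((y, k + j) :: L)
    · have hswap : Equiv.swap 0 1 y = x := by fin_cases x <;> fin_cases y <;> simp_all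
      have hmerge : of x ^ k * swapGenerators (syllableProd ((y, j) :: L)) =
          syllableProd ((x, k + j) :: L.map (Prod.map (Equiv.swap 0 1) id)) := by
        rw [map_syllableProd, List.map_cons, Prod.map, hswap, id, ← syllableProd_cons,
          syllableProd_cons_cons_self]
      have hprod := flipSum_mul_flipSum φ swapGenerators_swapGenerators (of x ^ k)
        (syllableProd ((y, j) :: L))
      rw [hmerge, eq_comm, ← eq_sub_iff_add_eq] at hprod
      rw [syllableProd_cons, hprod]
      exact sub_mem (mul_mem (hgen x k) (flipSum_syllableProd_mem hgen ((y, j) :: L)))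
        (flipSum_syllableProd_mem hgen _)
termination_by L => L.length
decreasing_by all_goals simp

theorem flipSum_mem (hgen : ∀ (i : Fin 2) (k : ℤ), flipSum φ swapGenerators (of i ^ k) ∈ B)
    (g : FreeGroup (Fin 2)) : flipSum φ swapGenerators g ∈ B := by
  obtain ⟨L, rfl⟩ := exists_syllableProd_eq g
  exact flipSum_syllableProd_mem φ hgen L

end SymmetricPart

theorem word_plus_flipped_word_mem_symmetric_algebra
    {A : Type*} [CStarAlgebra A]
    (u v : unitary A)
    (σ : A ≃⋆ₐ[ℂ] A) (hσu : σ u = v) (hσv : σ v = u)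
    (φ : FreeGroup (Fin 2) →* unitary A) (hφ : φ = FreeGroup.lift ![u, v])
    (g : FreeGroup (Fin 2)) :
    ((φ g : A) + σ (φ g)) ∈
      (StarAlgebra.adjoin ℂ
        {a : A | ∃ n : ℤ, a = ((u ^ n : unitary A) : A) + ((v ^ n : unitary A) : A)}
       ).topologicalClosure := by
  set B := (StarAlgebra.adjoin ℂ
    {a : A | ∃ n : ℤ, a = ((u ^ n : unitary A) : A) + ((v ^ n : unitary A) : A)}).topologicalClosure
  set ψ : FreeGroup (Fin 2) →* A := (unitary A).subtype.comp φ
  have hσψ : (σ : A →* A).comp ψ = ψ.comp swapGenerators := by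
    refine FreeGroup.ext_hom _ _ fun i => ?_
    fin_cases i <;> simp [ψ, hφ, hσu, hσv]
  have hgen (i : Fin 2) (k : ℤ) : flipSum ψ swapGenerators (of i ^ k) ∈ B := by
    refine StarSubalgebra.le_topologicalClosure _ (StarAlgebra.subset_adjoin ℂ _ ⟨k, ?_⟩)
    fin_cases i <;> simp [flipSum, ψ, hφ, add_comm]
  have hσg : σ (φ g) = ψ (swapGenerators g) := DFunLike.congr_fun hσψ g
  rw [hσg]
  exact flipSum_mem ψ hgen g
end

section
/- Let A be a unital C*-algebra and Z ∈ A with ‖Z‖ ≤ 1. Then the 2×2 matrix over A given by β(Z) = [[Z*Z, Z*√(1 − ZZ*)], [√(1 − ZZ*)·Z, 1 − ZZ*]] is a projection, i.e., β(Z) is self-adjoint and β(Z)² = β(Z) in the matrix *-algebra M₂(A). -/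
/-!
Put `s = √(1 - ZZ*)` and let `V` be the column `(Z*, s)ᵀ`, a `2 × 1` matrix over `A`. Then
`β(Z) = V V*`, and `V* V = ZZ* + s² = 1` because `‖Z‖ ≤ 1` makes `1 - ZZ*` positive. So `V` is an
isometry and `V V*` is a projection: `(V V*)² = V (V* V) V* = V V*`.
-/

open Matrix

theorem Matrix.isStarProjection_mul_conjTranspose_of_conjTranspose_mul_self_eq_one
    {m n α : Type*} [Fintype m] [Fintype n] [DecidableEq n] [Semiring α] [StarRing α]
    {V : Matrix m n α} (hV : Vᴴ * V = 1) : IsStarProjection (V * Vᴴ) where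
  isIdempotentElem := by
    rw [IsIdempotentElem, Matrix.mul_assoc, ← Matrix.mul_assoc Vᴴ, hV, Matrix.one_mul]
  isSelfAdjoint := by
    rw [IsSelfAdjoint, star_eq_conjTranspose, conjTranspose_mul, conjTranspose_conjTranspose]

theorem CStarAlgebra.mul_star_self_le_one {A : Type*} [CStarAlgebra A] [PartialOrder A]
    [StarOrderedRing A] {Z : A} (hZ : ‖Z‖ ≤ 1) : Z * star Z ≤ 1 := by
  rw [← CStarAlgebra.norm_le_one_iff_of_nonneg _ (mul_star_self_nonneg Z),
    CStarRing.norm_self_mul_star]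
  exact mul_le_one₀ hZ (norm_nonneg Z) hZ

theorem beta_is_projection
    {A : Type*} [CStarAlgebra A] [PartialOrder A] [StarOrderedRing A]
    (Z : A) (hZ : ‖Z‖ ≤ 1)
    (β : Matrix (Fin 2) (Fin 2) A)
    (hβ : β = !![star Z * Z, star Z * CFC.sqrt (1 - Z * star Z);
                 CFC.sqrt (1 - Z * star Z) * Z, 1 - Z * star Z]) :
    star β = β ∧ β * β = β := by
  set s := CFC.sqrt (1 - Z * star Z)
  have hs_mul_self : s * s = 1 - Z * star Z :=
    CFC.sqrt_mul_sqrt_self _ (sub_nonneg.mpr (CStarAlgebra.mul_star_self_le_one hZ))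
  have hs_star : star s = s := (CFC.sqrt_nonneg _).isSelfAdjoint
  let V : Matrix (Fin 2) (Fin 1) A := !![star Z; s]
  have hV : Vᴴ * V = 1 := by
    ext i j
    fin_cases i; fin_cases j
    simp [V, Matrix.mul_apply, Fin.sum_univ_two, hs_star, hs_mul_self]
  have hβV : β = V * Vᴴ := by
    subst hβ
    ext i j
    fin_cases i <;> fin_cases j <;> simp [V, Matrix.mul_apply, hs_star, hs_mul_self]
  obtain ⟨hβ_idem, hβ_sa⟩ :=
    hβV ▸ isStarProjection_mul_conjTranspose_of_conjTranspose_mul_self_eq_one hV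
  exact ⟨hβ_sa, hβ_idem⟩
end

section
/- Let A be a unital C*-algebra and let u and v be unitary elements of A. For t ∈ [0,1] set Z_t = t·u + (1−t)·v (so ‖Z_t‖ ≤ 1), and let β_t = [[Z_t*Z_t, Z_t*√(1 − Z_tZ_t*)], [√(1 − Z_tZ_t*)·Z_t, 1 − Z_tZ_t*]] ∈ M₂(A). Then: (i) the map t ↦ β_t is continuous from [0,1] to M₂(A); (ii) β_t is a projection for every t ∈ [0,1]; (iii) β_0 = β_1 = p₂ where p₂ = [[1,0],[0,0]]; and (iv) β_{1/2} = β(Z) where Z = (1/2)(u+v). In particular, the projection β(Z) is joined to p₂ by a continuous path of projections in M₂(A). -/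
/-!
Writing `s = 1 - W W*`, the matrix `β(W)` is `V V*` for the column `V = (W*, √s)`, and
`V* V = W W* + s = 1`; hence `V V*` is a projection. Along the segment `Z_t` between two unitaries
all `Z_t` lie in the closed unit ball, where `s ≥ 0` and `√` is continuous, which gives continuity;
at a unitary `W` we have `W* W = 1` and `s = 0`, so `β(W) = p₂`.
-/

open Matrix Metric

theorem isStarProjection_mul_conjTranspose {m n R : Type*} [Fintype m] [Fintype n] [DecidableEq n]
    [Ring R] [StarRing R] (V : Matrix m n R) (hV : Vᴴ * V = 1) :
    IsStarProjection (V * Vᴴ) where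
  isIdempotentElem := by rw [IsIdempotentElem, Matrix.mul_assoc, ← Matrix.mul_assoc Vᴴ, hV,
    Matrix.one_mul]
  isSelfAdjoint := by rw [IsSelfAdjoint, star_eq_conjTranspose, conjTranspose_mul,
    conjTranspose_conjTranspose]

theorem isStarProjection_of_mul_self_eq_one_sub {R : Type*} [Ring R] [StarRing R] {w r : R}
    (hr : IsSelfAdjoint r) (hrr : r * r = 1 - w * star w) :
    IsStarProjection !![star w * w, star w * r; r * w, 1 - w * star w] := by
  let V : Matrix (Fin 2) (Fin 1) R := !![star w; r]
  have hV : Vᴴ * V = 1 := by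
    ext i j
    fin_cases i; fin_cases j
    simp [V, Matrix.mul_apply, hr.star_eq, hrr]
  convert isStarProjection_mul_conjTranspose V hV using 1
  ext i j
  fin_cases i <;> fin_cases j <;> simp [V, Matrix.mul_apply, hr.star_eq, hrr]

theorem norm_le_one_of_mem_unitary {E : Type*} [NormedRing E] [StarRing E] [CStarRing E]
    {u : E} (hu : u ∈ unitary E) : ‖u‖ ≤ 1 := by
  nontriviality E
  exact (CStarRing.norm_of_mem_unitary hu).le

section CStarAlgebra

variable {A : Type*} [CStarAlgebra A] [PartialOrder A] [StarOrderedRing A]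

theorem sub_mul_star_nonneg_of_norm_le_one {W : A} (hW : ‖W‖ ≤ 1) : 0 ≤ 1 - W * star W := by
  rw [sub_nonneg]
  calc W * star W ≤ algebraMap ℝ A (‖W‖ ^ 2) := CStarAlgebra.mul_star_le_algebraMap_norm_sq
    _ ≤ algebraMap ℝ A 1 := by
        gcongr
        exact pow_le_one₀ (norm_nonneg W) hW
    _ = 1 := map_one _

noncomputable def betaMatrix (W : A) : Matrix (Fin 2) (Fin 2) A :=
  !![star W * W, star W * CFC.sqrt (1 - W * star W);
     CFC.sqrt (1 - W * star W) * W, 1 - W * star W]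

theorem isStarProjection_betaMatrix {W : A} (hW : ‖W‖ ≤ 1) : IsStarProjection (betaMatrix W) :=
  isStarProjection_of_mul_self_eq_one_sub (IsSelfAdjoint.of_nonneg (CFC.sqrt_nonneg _))
    (CFC.sqrt_mul_sqrt_self _ (sub_mul_star_nonneg_of_norm_le_one hW))

theorem betaMatrix_of_mem_unitary {u : A} (hu : u ∈ unitary A) :
    betaMatrix u = !![1, 0; 0, 0] := by
  simp [betaMatrix, Unitary.star_mul_self_of_mem hu, Unitary.mul_star_self_of_mem hu]

theorem continuousOn_betaMatrix :
    ContinuousOn (betaMatrix : A → Matrix (Fin 2) (Fin 2) A) (closedBall 0 1) := by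
  have hsqrt : ContinuousOn (fun W : A => CFC.sqrt (1 - W * star W)) (closedBall 0 1) :=
    CFC.continuousOn_sqrt.comp (by fun_prop) fun W hW =>
      sub_mul_star_nonneg_of_norm_le_one (mem_closedBall_zero_iff.mp hW)
  refine continuousOn_pi.2 fun i => continuousOn_pi.2 fun j => ?_
  fin_cases i <;> fin_cases j
  · exact (continuous_star.mul continuous_id).continuousOn
  · exact continuous_star.continuousOn.mul hsqrt
  · exact hsqrt.mul continuousOn_id
  · exact (continuous_const.sub (continuous_id.mul continuous_star)).continuousOn

end CStarAlgebra

theorem beta_homotopy_of_projections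
    {A : Type*} [CStarAlgebra A] [PartialOrder A] [StarOrderedRing A]
    (u v : A) (hu : u ∈ unitary A) (hv : v ∈ unitary A)
    (Zt : ℝ → A) (hZt : ∀ t : ℝ, Zt t = t • u + (1 - t) • v)
    (B : ℝ → Matrix (Fin 2) (Fin 2) A)
    (hB : ∀ t : ℝ, B t =
      !![star (Zt t) * Zt t, star (Zt t) * CFC.sqrt (1 - Zt t * star (Zt t));
         CFC.sqrt (1 - Zt t * star (Zt t)) * Zt t, 1 - Zt t * star (Zt t)])
    (p₂ : Matrix (Fin 2) (Fin 2) A) (hp : p₂ = !![1, 0; 0, 0])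
    (Z : A) (hZ : Z = (1 / 2 : ℝ) • (u + v)) :
    ContinuousOn B (Set.Icc 0 1) ∧
    (∀ t ∈ Set.Icc (0 : ℝ) 1, star (B t) = B t ∧ B t * B t = B t) ∧
    B 0 = p₂ ∧ B 1 = p₂ ∧
    B (1 / 2) =
      !![star Z * Z, star Z * CFC.sqrt (1 - Z * star Z);
         CFC.sqrt (1 - Z * star Z) * Z, 1 - Z * star Z] := by
  obtain rfl : Zt = fun t => t • u + (1 - t) • v := funext hZt
  obtain rfl : B = fun t => betaMatrix (t • u + (1 - t) • v) := funext hB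
  have hball : Set.MapsTo (fun t : ℝ => t • u + (1 - t) • v) (Set.Icc 0 1) (closedBall 0 1) :=
    fun t ht => convex_closedBall (0 : A) 1
      (mem_closedBall_zero_iff.mpr (norm_le_one_of_mem_unitary hu))
      (mem_closedBall_zero_iff.mpr (norm_le_one_of_mem_unitary hv)) ht.1 (sub_nonneg.mpr ht.2)
      (add_sub_cancel _ _)
  subst hp hZ
  refine ⟨continuousOn_betaMatrix.comp (by fun_prop) hball, fun t ht => ?_, ?_, ?_, ?_⟩
  · have hβ := isStarProjection_betaMatrix (mem_closedBall_zero_iff.mp (hball ht))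
    exact ⟨hβ.isSelfAdjoint, hβ.isIdempotentElem⟩
  · simpa using betaMatrix_of_mem_unitary hv
  · simpa using betaMatrix_of_mem_unitary hu
  · change betaMatrix _ = betaMatrix _
    norm_num [smul_add]
end
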